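/- Let 0 < λ < 1/2 and P ∈ ℝ. Then there is no local solution (ψ, (a, b)) of the homogeneous Euler ODE with parameters (λ, P) such that b − a ≤ 2π and ∫_a^b ψ′(θ)² dθ < ∞. In other words, for 0 < λ < 1/2 every homogeneous solution with locally finite energy is non-vanishing (elliptic). -/

import Mathlib

/-!
Along a positive solution `ψ` of the Euler ODE the quantity
`ψ ^ q * (ψ' ^ 2 + λ ^ 2 * ψ ^ 2 + 2 * P)`, with `q = 2 / λ - 2`, is conserved; its constant value
`κ` is the limit of `ψ ^ q * ψ' ^ 2` at the zero `a`, so `κ ≥ 0`.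

If `κ > 0`, then `ψ ^ (1 / λ)` is Lipschitz near `a`, so `ψ ^ q ≲ (θ - a) ^ (2 - 2λ)` and
`ψ' ^ 2 ≳ (θ - a) ^ (2λ - 2)`, which is not integrable because `λ ≤ 1 / 2`.

If `κ = 0`, then `ψ'' = -λ ^ 2 * ψ` with `ψ'` bounded. The Wronskian of `ψ` and
`sin (λ (θ - a))` is constant and tends to `0` at `a`, so `ψ` is a multiple of this sine on `(a, b)`
as long as the sine stays positive; vanishing at `b` then forces `π ≤ λ (b - a)`, while
`λ (b - a) ≤ 2πλ < π`.
-/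

open Real Set Filter Topology

theorem exists_const_of_hasDerivAt_zero {f : ℝ → ℝ} {a b : ℝ}
    (hf : ∀ x ∈ Ioo a b, HasDerivAt f 0 x) : ∃ c, ∀ x ∈ Ioo a b, f x = c :=
  isOpen_Ioo.exists_is_const_of_deriv_eq_zero isPreconnected_Ioo
    (fun x hx => (hf x hx).differentiableAt.differentiableWithinAt)
    (fun x hx => (hf x hx).deriv)

theorem ContinuousOn.tendsto_nhdsGT_left {f : ℝ → ℝ} {a b : ℝ} (hab : a < b)
    (hf : ContinuousOn f (Icc a b)) : Tendsto f (𝓝[>] a) (𝓝 (f a)) :=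
  (hf a (left_mem_Icc.2 hab.le)).mono_of_mem_nhdsWithin (Icc_mem_nhdsGT hab)

theorem ContinuousOn.tendsto_nhdsLT_right {f : ℝ → ℝ} {a b : ℝ} (hab : a < b)
    (hf : ContinuousOn f (Icc a b)) : Tendsto f (𝓝[<] b) (𝓝 (f b)) :=
  (hf b (right_mem_Icc.2 hab.le)).mono_of_mem_nhdsWithin (Icc_mem_nhdsLT hab)

theorem not_intervalIntegrable_of_mul_inv_sub_le {f : ℝ → ℝ} {a b c : ℝ} (hab : a < b)
    (hc : 0 < c) (hf : ∀ᶠ x in 𝓝[>] a, c * (x - a)⁻¹ ≤ f x) :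
    ¬IntervalIntegrable f MeasureTheory.volume a b := by
  intro hint
  obtain ⟨t, hat : a < t, hsub⟩ :=
    mem_nhdsGT_iff_exists_Ioc_subset.1 (hf.and (Ioo_mem_nhdsGT hab))
  have hint_t : IntervalIntegrable (fun x => c⁻¹ * f x) MeasureTheory.volume a t :=
    (hint.mono_set (uIcc_subset_uIcc left_mem_uIcc
      (mem_uIcc_of_le hat.le (hsub ⟨hat, le_rfl⟩).2.2.le))).const_mul c⁻¹
  refine (intervalIntegrable_sub_inv_iff.not.2 (not_or.2 ⟨hat.ne, not_not.2 left_mem_uIcc⟩))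
    (hint_t.mono_fun (measurable_id.sub_const a).inv.aestronglyMeasurable ?_)
  rw [uIoc_of_le hat.le]
  filter_upwards [MeasureTheory.ae_restrict_mem measurableSet_Ioc] with x hx
  have hxa : 0 < (x - a)⁻¹ := inv_pos.2 (sub_pos.2 hx.1)
  have hle : (x - a)⁻¹ ≤ c⁻¹ * f x := by
    rw [le_inv_mul_iff₀ hc]
    exact (hsub hx).1
  rwa [Real.norm_of_nonneg hxa.le, Real.norm_of_nonneg (hxa.le.trans hle)]

theorem pi_le_mul_sub_of_hasDerivAt_neg_sq_mul {ψ ψ' : ℝ → ℝ} {lam a b C : ℝ} (hlam : 0 < lam)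
    (hab : a < b) (hpos : ∀ θ ∈ Ioo a b, 0 < ψ θ)
    (hd1 : ∀ θ ∈ Ioo a b, HasDerivAt ψ (ψ' θ) θ)
    (hd2 : ∀ θ ∈ Ioo a b, HasDerivAt ψ' (-lam ^ 2 * ψ θ) θ)
    (hbdd : ∀ θ ∈ Ioo a b, |ψ' θ| ≤ C)
    (ha : Tendsto ψ (𝓝[>] a) (𝓝 0)) (hb : Tendsto ψ (𝓝[<] b) (𝓝 0)) :
    π ≤ lam * (b - a) := by
  by_contra! hlt
  have hsin_pos : ∀ θ ∈ Ioc a b, 0 < sin (lam * (θ - a)) := fun θ hθ =>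
    sin_pos_of_pos_of_lt_pi (by nlinarith [hθ.1]) (by nlinarith [hθ.2])
  have hsin (θ : ℝ) : HasDerivAt (fun θ => sin (lam * (θ - a))) (lam * cos (lam * (θ - a))) θ :=
    (((hasDerivAt_id θ).sub_const a).const_mul lam).sin.congr_deriv (by simp [mul_comm])
  have hcos (θ : ℝ) : HasDerivAt (fun θ => lam * cos (lam * (θ - a)))
      (-lam ^ 2 * sin (lam * (θ - a))) θ :=
    ((((hasDerivAt_id θ).sub_const a).const_mul lam).cos.const_mul lam).congr_deriv (by simp; ring)
  obtain ⟨w, hw⟩ : ∃ w, ∀ θ ∈ Ioo a b,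
      ψ θ * (lam * cos (lam * (θ - a))) - ψ' θ * sin (lam * (θ - a)) = w :=
    exists_const_of_hasDerivAt_zero fun θ hθ =>
      (((hd1 θ hθ).mul (hcos θ)).sub ((hd2 θ hθ).mul (hsin θ))).congr_deriv (by ring)
  have hw0 : w = 0 := by
    have hcos_lim : Tendsto (fun θ => lam * cos (lam * (θ - a))) (𝓝[>] a) (𝓝 lam) := by
      simpa using ((hcos a).continuousAt.tendsto).mono_left nhdsWithin_le_nhds
    have hsin_lim : Tendsto (fun θ => sin (lam * (θ - a))) (𝓝[>] a) (𝓝 0) := by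
      simpa using ((hsin a).continuousAt.tendsto).mono_left nhdsWithin_le_nhds
    have hbdd' : IsBoundedUnder (· ≤ ·) (𝓝[>] a) (fun θ => ‖ψ' θ‖) :=
      isBoundedUnder_of_eventually_le (a := C) (by
        filter_upwards [Ioo_mem_nhdsGT hab] with θ hθ using hbdd θ hθ)
    have hlim := (ha.mul hcos_lim).sub (hsin_lim.zero_mul_isBoundedUnder_le hbdd')
    rw [zero_mul, sub_zero] at hlim
    refine tendsto_nhds_unique (hlim.congr' ?_) tendsto_const_nhds |>.symm
    filter_upwards [Ioo_mem_nhdsGT hab] with θ hθ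
    rw [← hw θ hθ, mul_comm (sin _)]
  obtain ⟨c, hc⟩ : ∃ c, ∀ θ ∈ Ioo a b, ψ θ / sin (lam * (θ - a)) = c := by
    refine exists_const_of_hasDerivAt_zero fun θ hθ => ?_
    refine ((hd1 θ hθ).div (hsin θ) (hsin_pos θ ⟨hθ.1, hθ.2.le⟩).ne').congr_deriv ?_
    rw [div_eq_zero_iff]
    left
    linarith [hw θ hθ]
  have hmid : (a + b) / 2 ∈ Ioo a b := ⟨by linarith, by linarith⟩
  have hc_pos : 0 < c := hc _ hmid ▸ div_pos (hpos _ hmid) (hsin_pos _ (Ioo_subset_Ioc_self hmid))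
  have hlim : Tendsto ψ (𝓝[<] b) (𝓝 (c * sin (lam * (b - a)))) := by
    refine (((hsin b).continuousAt.tendsto.mono_left nhdsWithin_le_nhds).const_mul c).congr' ?_
    filter_upwards [Ioo_mem_nhdsLT hab] with θ hθ
    rw [← hc θ hθ, div_mul_cancel₀ _ (hsin_pos θ (Ioo_subset_Ioc_self hθ)).ne']
  exact (mul_pos hc_pos (hsin_pos b ⟨hab, le_rfl⟩)).ne' (tendsto_nhds_unique hlim hb)

theorem rpow_inv_le_mul_sub_of_rpow_mul_sq_le {ψ ψ' : ℝ → ℝ} {lam a t M : ℝ} (hlam : 0 < lam)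
    (hM : 0 ≤ M) (hcont : ContinuousOn ψ (Icc a t)) (ha : ψ a = 0)
    (hpos : ∀ θ ∈ Ioo a t, 0 < ψ θ) (hd : ∀ θ ∈ Ioo a t, HasDerivAt ψ (ψ' θ) θ)
    (hbound : ∀ θ ∈ Ioo a t, ψ θ ^ (2 / lam - 2) * ψ' θ ^ 2 ≤ (lam * M) ^ 2) :
    ∀ θ ∈ Icc a t, ψ θ ^ (1 / lam) ≤ M * (θ - a) := by
  have hu (θ) (hθ : θ ∈ Ioo a t) : HasDerivAt (fun θ => ψ θ ^ (1 / lam))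
      (ψ' θ * (1 / lam) * ψ θ ^ (1 / lam - 1)) θ :=
    (hd θ hθ).rpow_const (Or.inl (hpos θ hθ).ne')
  have hu_le : ∀ θ ∈ interior (Icc a t), deriv (fun θ => ψ θ ^ (1 / lam)) θ ≤ M := by
    rw [interior_Icc]
    intro θ hθ
    have hψ := hpos θ hθ
    rw [(hu θ hθ).deriv]
    refine le_of_sq_le_sq ?_ hM
    calc (ψ' θ * (1 / lam) * ψ θ ^ (1 / lam - 1)) ^ 2
        = ψ θ ^ (2 / lam - 2) * ψ' θ ^ 2 / lam ^ 2 := by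
          have hsq : (ψ θ ^ (1 / lam - 1)) ^ 2 = ψ θ ^ (2 / lam - 2) := by
            rw [← rpow_mul_natCast hψ.le]; ring_nf
          rw [mul_pow, mul_pow, hsq]
          field_simp
      _ ≤ M ^ 2 := by
          rw [div_le_iff₀ (by positivity)]
          linarith [hbound θ hθ]
  intro θ hθ
  have := (convex_Icc a t).image_sub_le_mul_sub_of_deriv_le
    (hcont.rpow_const fun _ _ => Or.inr (by positivity))
    (fun x hx => by
      rw [interior_Icc] at hx
      exact (hu x hx).differentiableAt.differentiableWithinAt)
    hu_le a (left_mem_Icc.2 (hθ.1.trans hθ.2)) θ hθ hθ.1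
  rwa [ha, zero_rpow (by positivity), sub_zero] at this

theorem mul_inv_le_of_rpow_inv_le {lam κ M x p d : ℝ} (hlam0 : 0 < lam) (hlam : lam ≤ 1 / 2)
    (hκ : 0 ≤ κ) (hM : 0 < M) (hx : 0 < x) (hx1 : x ≤ 1) (hp : 0 < p)
    (hpM : p ^ (1 / lam) ≤ M * x) (hκd : κ ≤ p ^ (2 / lam - 2) * d) :
    κ * M ^ (2 * lam - 2) * x⁻¹ ≤ d := by
  have hpq : p ^ (2 / lam - 2) ≤ (M * x) ^ (2 - 2 * lam) := by
    have : p ^ (2 / lam - 2) = (p ^ (1 / lam)) ^ (2 - 2 * lam) := by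
      rw [← rpow_mul hp.le]; congr 1; field_simp
    rw [this]
    exact rpow_le_rpow (by positivity) hpM (by linarith)
  have hd : 0 ≤ d := nonneg_of_mul_nonneg_right (hκ.trans hκd) (by positivity)
  calc κ * M ^ (2 * lam - 2) * x⁻¹
      ≤ κ * M ^ (2 * lam - 2) * x ^ (2 * lam - 2) := by
        gcongr
        rw [← rpow_neg_one]
        exact rpow_le_rpow_of_exponent_ge hx hx1 (by linarith)
    _ = κ / (M * x) ^ (2 - 2 * lam) := by
        rw [mul_rpow hM.le hx.le, show 2 * lam - 2 = -(2 - 2 * lam) by ring,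
          rpow_neg hM.le, rpow_neg hx.le]
        field_simp
    _ ≤ d := by
        rw [div_le_iff₀ (by positivity)]
        calc κ ≤ p ^ (2 / lam - 2) * d := hκd
          _ ≤ (M * x) ^ (2 - 2 * lam) * d := by gcongr
          _ = d * (M * x) ^ (2 - 2 * lam) := mul_comm _ _

theorem eventually_mul_inv_sub_le_sq_of_tendsto {ψ ψ' : ℝ → ℝ} {lam a b κ : ℝ}
    (hlam0 : 0 < lam) (hlam : lam ≤ 1 / 2) (hκ : 0 < κ) (hab : a < b)
    (hcont : ContinuousOn ψ (Icc a b)) (ha : ψ a = 0) (hpos : ∀ θ ∈ Ioo a b, 0 < ψ θ)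
    (hd : ∀ θ ∈ Ioo a b, HasDerivAt ψ (ψ' θ) θ)
    (hlim : Tendsto (fun θ => ψ θ ^ (2 / lam - 2) * ψ' θ ^ 2) (𝓝[>] a) (𝓝 κ)) :
    ∃ c > 0, ∀ᶠ θ in 𝓝[>] a, c * (θ - a)⁻¹ ≤ ψ' θ ^ 2 := by
  obtain ⟨t, hat : a < t, hsub⟩ := mem_nhdsGT_iff_exists_Ioc_subset.1
    (inter_mem (Ioo_mem_nhdsGT hab) (inter_mem (Ioo_mem_nhdsGT (lt_add_one a))
      (hlim (Ioo_mem_nhds (half_lt_self hκ) (lt_two_mul_self hκ)))))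
  have htb : t < b := (hsub ⟨hat, le_rfl⟩).1.2
  set M := √(2 * κ) / lam with hM_def
  have hM : 0 < M := by positivity
  have hψM : ∀ θ ∈ Icc a t, ψ θ ^ (1 / lam) ≤ M * (θ - a) := by
    refine rpow_inv_le_mul_sub_of_rpow_mul_sq_le hlam0 hM.le
      (hcont.mono (Icc_subset_Icc_right htb.le)) ha
      (fun θ hθ => hpos θ ⟨hθ.1, hθ.2.trans htb⟩) (fun θ hθ => hd θ ⟨hθ.1, hθ.2.trans htb⟩)
      fun θ hθ => ?_
    rw [hM_def, mul_div_cancel₀ _ hlam0.ne', sq_sqrt (by positivity)]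
    exact (hsub (Ioo_subset_Ioc_self hθ)).2.2.2.le
  refine ⟨κ / 2 * M ^ (2 * lam - 2), by positivity, ?_⟩
  filter_upwards [Ioo_mem_nhdsGT hat] with θ hθ
  obtain ⟨hθb, hθ1, hκθ, -⟩ := hsub (Ioo_subset_Ioc_self hθ)
  exact mul_inv_le_of_rpow_inv_le hlam0 hlam (by positivity) hM (sub_pos.2 hθ.1)
    (by linarith [hθ1.2]) (hpos θ hθb) (hψM θ (Ioo_subset_Icc_self hθ)) hκθ.le

noncomputable def eulerFirstIntegral (lam P : ℝ) (ψ ψ' : ℝ → ℝ) (θ : ℝ) : ℝ :=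
  ψ θ ^ (2 / lam - 2) * (ψ' θ ^ 2 + lam ^ 2 * ψ θ ^ 2 + 2 * P)

theorem hasDerivAt_eulerFirstIntegral {lam P θ : ℝ} {ψ ψ' ψ'' : ℝ → ℝ} (hlam : lam ≠ 0)
    (hψ : 0 < ψ θ) (hd1 : HasDerivAt ψ (ψ' θ) θ) (hd2 : HasDerivAt ψ' (ψ'' θ) θ)
    (hode : 2 * (lam - 1) * P =
      -(lam - 1) * (ψ' θ) ^ 2 + lam ^ 2 * (ψ θ) ^ 2 + lam * (ψ'' θ) * (ψ θ)) :
    HasDerivAt (eulerFirstIntegral lam P ψ ψ') 0 θ := by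
  have hpow := hd1.rpow_const (p := 2 / lam - 2) (Or.inl hψ.ne')
  have hsum := ((hd2.fun_pow 2).add ((hd1.fun_pow 2).const_mul (lam ^ 2))).add_const (2 * P)
  refine (hpow.mul hsum).congr_deriv ?_
  rw [rpow_sub_one hψ.ne' (2 / lam - 2)]
  simp only [Pi.add_apply]
  generalize ψ θ ^ (2 / lam - 2) = r
  field_simp
  linear_combination (-2 * ψ' θ * r) * hode

theorem Filter.Tendsto.rpow_mul_sq_of_eulerFirstIntegral_eq {lam P a b κ : ℝ} {ψ ψ' : ℝ → ℝ}
    (hq : 0 < 2 / lam - 2) (hab : a < b)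
    (hF : ∀ θ ∈ Ioo a b, eulerFirstIntegral lam P ψ ψ' θ = κ) (hψ : Tendsto ψ (𝓝[>] a) (𝓝 0)) :
    Tendsto (fun θ => ψ θ ^ (2 / lam - 2) * ψ' θ ^ 2) (𝓝[>] a) (𝓝 κ) := by
  have hpow : Tendsto (fun θ => ψ θ ^ (2 / lam - 2)) (𝓝[>] a) (𝓝 0) := by
    simpa [Function.comp_def, zero_rpow hq.ne'] using
      (continuousAt_rpow_const 0 _ (Or.inr hq.le)).tendsto.comp hψ
  have hlim := tendsto_const_nhds (x := κ).sub
    (hpow.mul (((hψ.pow 2).const_mul (lam ^ 2)).add_const (2 * P)))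
  rw [zero_mul, sub_zero] at hlim
  refine hlim.congr' ?_
  filter_upwards [Ioo_mem_nhdsGT hab] with θ hθ
  rw [← hF θ hθ, eulerFirstIntegral]
  ring

/-- For `0 < λ < 1/2` there is no local solution `(ψ, (a,b))` of the homogeneous
Euler ODE with `b - a ≤ 2π` and finite energy `∫_a^b ψ'² < ∞`: every finite-energy homogeneous
solution is non-vanishing (elliptic). -/
theorem no_vanishing_solutions_small_lambda
    (lam P : ℝ) (hlam0 : 0 < lam) (hlam : lam < 1/2)
    (a b : ℝ) (hab : a < b) (hspan : b - a ≤ 2 * Real.pi)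
    (ψ ψ' ψ'' : ℝ → ℝ)
    (hcont : ContinuousOn ψ (Set.Icc a b))
    (ha : ψ a = 0) (hb : ψ b = 0)
    (hpos : ∀ θ ∈ Set.Ioo a b, 0 < ψ θ)
    (hd1 : ∀ θ ∈ Set.Ioo a b, HasDerivAt ψ (ψ' θ) θ)
    (hd2 : ∀ θ ∈ Set.Ioo a b, HasDerivAt ψ' (ψ'' θ) θ)
    (hode : ∀ θ ∈ Set.Ioo a b, 2 * (lam - 1) * P =
      -(lam - 1) * (ψ' θ) ^ 2 + lam ^ 2 * (ψ θ) ^ 2 + lam * (ψ'' θ) * (ψ θ))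
    (hH1 : IntervalIntegrable (fun θ => (ψ' θ) ^ 2) MeasureTheory.volume a b) :
    False := by
  have hq : 0 < 2 / lam - 2 := by
    rw [sub_pos, lt_div_iff₀ hlam0]
    linarith
  have hψa : Tendsto ψ (𝓝[>] a) (𝓝 0) := ha ▸ hcont.tendsto_nhdsGT_left hab
  obtain ⟨κ, hκ⟩ := exists_const_of_hasDerivAt_zero fun θ hθ =>
    hasDerivAt_eulerFirstIntegral hlam0.ne' (hpos θ hθ) (hd1 θ hθ) (hd2 θ hθ) (hode θ hθ)
  have hlim := hψa.rpow_mul_sq_of_eulerFirstIntegral_eq hq hab hκ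
  have hκ_nonneg : 0 ≤ κ := ge_of_tendsto hlim <| by
    filter_upwards [Ioo_mem_nhdsGT hab] with θ hθ
    have := hpos θ hθ
    positivity
  rcases hκ_nonneg.eq_or_lt with rfl | hκ_pos
  · have henergy (θ) (hθ : θ ∈ Ioo a b) : ψ' θ ^ 2 + lam ^ 2 * ψ θ ^ 2 + 2 * P = 0 :=
      (mul_eq_zero.1 (hκ θ hθ)).resolve_left (rpow_pos_of_pos (hpos θ hθ) _).ne'
    have hharmonic (θ) (hθ : θ ∈ Ioo a b) : HasDerivAt ψ' (-lam ^ 2 * ψ θ) θ :=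
      (hd2 θ hθ).congr_deriv <| mul_left_cancel₀ (mul_ne_zero hlam0.ne' (hpos θ hθ).ne') <| by
        linear_combination -hode θ hθ + (lam - 1) * henergy θ hθ
    have hbdd (θ) (hθ : θ ∈ Ioo a b) : |ψ' θ| ≤ √(-2 * P) :=
      abs_le_sqrt <| by nlinarith [henergy θ hθ, sq_nonneg (lam * ψ θ)]
    have hπ := pi_le_mul_sub_of_hasDerivAt_neg_sq_mul hlam0 hab hpos hd1 hharmonic hbdd hψa
      (hb ▸ hcont.tendsto_nhdsLT_right hab)
    nlinarith [mul_le_mul_of_nonneg_left hspan hlam0.le, pi_pos]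
  · obtain ⟨c, hc, hblowup⟩ := eventually_mul_inv_sub_le_sq_of_tendsto hlam0 hlam.le hκ_pos hab
      hcont ha hpos hd1 hlim
    exact not_intervalIntegrable_of_mul_inv_sub_le hab hc hblowup hH1
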